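/- Let A : ℝ → ℝ be L-Lipschitz and define γ : ℝ → ℍ by γ(y) = (A(y), y, ∫₀^y A(r) dr − ½ y A(y)). Then for all y, y' ∈ ℝ, γ(y')⁻¹·γ(y) = (A(y) − A(y'), y − y', ∫_y^{y'} (A(y) + A(y') − 2A(r))/2 dr), and consequently the map Γ : ℝ² → ℍ, Γ(y,t) := γ(y)·(0,0,t), is bilipschitz with constant comparable to 1 + L: there is an absolute constant C so that C⁻¹(1+L)⁻¹ d_π((y,t),(y',t')) ≤ d(Γ(y,t), Γ(y',t')) ≤ C(1+L) d_π((y,t),(y',t')), where d_π((y,t),(y',t')) = |y − y'| + |t − t'|^{1/2}. -/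

import Mathlib

/-!
The curve `γ` is horizontal, and the vertical coordinate of `γ(y')⁻¹ · γ(y)` is the error of
the trapezoid rule for `∫_y^{y'} A`, which is at most `L |y - y'|²` for `L`-Lipschitz `A`.
Since `Γ(y,t)` differs from `γ(y)` by a central element, `d(Γ(y,t), Γ(y',t'))` is the norm of
`(A y - A y', y - y', t - t' + error)`: its horizontal part lies between `|y - y'|` and
`(1 + L) |y - y'|`, and `√|t - t' + error|` differs from `√|t - t'|` by at most
`√(L |y - y'|²) ≤ (1 + L) |y - y'|`. Both bounds then hold with `C = 3`.
-/

/-- Heisenberg group product on `ℝ³`. -/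
noncomputable def Hmul (p q : ℝ × ℝ × ℝ) : ℝ × ℝ × ℝ :=
  (p.1 + q.1, p.2.1 + q.2.1, p.2.2 + q.2.2 + (p.1 * q.2.1 - q.1 * p.2.1) / 2)

/-- Heisenberg group inverse. -/
def Hinv (p : ℝ × ℝ × ℝ) : ℝ × ℝ × ℝ := (-p.1, -p.2.1, -p.2.2)

/-- The max-norm `‖(x,y,t)‖ = max (√(x²+y²)) (√|t|)`. -/
noncomputable def Hnorm (p : ℝ × ℝ × ℝ) : ℝ :=
  max (Real.sqrt (p.1 ^ 2 + p.2.1 ^ 2)) (Real.sqrt |p.2.2|)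

/-- The left-invariant Heisenberg distance `d(p,q) = ‖q⁻¹ · p‖`. -/
noncomputable def Hdist (p q : ℝ × ℝ × ℝ) : ℝ := Hnorm (Hmul (Hinv q) p)

/-- The horizontal lift `γ(y) = (A(y), y, ∫₀^y A − ½ y A(y))` of a Lipschitz
function `A`. -/
noncomputable def gammaA (A : ℝ → ℝ) (y : ℝ) : ℝ × ℝ × ℝ :=
  (A y, y, (∫ r in (0 : ℝ)..y, A r) - y * A y / 2)

/-- The flag parametrisation `Γ(y,t) = γ(y) · (0,0,t)`. -/
noncomputable def GammaA (A : ℝ → ℝ) (p : ℝ × ℝ) : ℝ × ℝ × ℝ :=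
  Hmul (gammaA A p.1) (0, 0, p.2)

open MeasureTheory
open scoped NNReal

lemma Real.sqrt_add_le_add_sqrt {a b : ℝ} (ha : 0 ≤ a) (hb : 0 ≤ b) :
    √(a + b) ≤ √a + √b :=
  Real.sqrt_le_iff.mpr ⟨by positivity, by
    nlinarith [Real.sq_sqrt ha, Real.sq_sqrt hb, Real.sqrt_nonneg a, Real.sqrt_nonneg b]⟩

lemma Real.sqrt_abs_add_le (x y : ℝ) : √|x + y| ≤ √|x| + √|y| :=
  (Real.sqrt_le_sqrt (abs_add_le x y)).trans
    (Real.sqrt_add_le_add_sqrt (abs_nonneg x) (abs_nonneg y))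

lemma sqrt_abs_le_of_abs_le_mul_sq {I a K : ℝ} (hK : 0 ≤ K) (hI : |I| ≤ K * a ^ 2) :
    √|I| ≤ (1 + K) * |a| := by
  rw [← Real.sqrt_sq (by positivity : 0 ≤ (1 + K) * |a|)]
  refine Real.sqrt_le_sqrt (hI.trans ?_)
  rw [mul_pow, sq_abs]
  exact mul_le_mul_of_nonneg_right (by nlinarith) (sq_nonneg a)

lemma abs_le_Hnorm (u a t : ℝ) : |a| ≤ Hnorm (u, a, t) := by
  rw [← Real.sqrt_sq_eq_abs]
  exact (Real.sqrt_le_sqrt (by nlinarith [sq_nonneg u])).trans (le_max_left _ _)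

lemma sqrt_abs_le_Hnorm (u a t : ℝ) : √|t| ≤ Hnorm (u, a, t) :=
  le_max_right _ _

lemma Hmul_Hinv_Hmul_center (p q : ℝ × ℝ × ℝ) (s t : ℝ) :
    Hmul (Hinv (Hmul p (0, 0, s))) (Hmul q (0, 0, t)) =
      Hmul (Hmul (Hinv p) q) (0, 0, t - s) := by
  simp only [Hmul, Hinv, Prod.mk.injEq]
  refine ⟨by ring, by ring, by ring⟩

section Lift

variable {A : ℝ → ℝ}

lemma integral_trapezoid_defect {y y' : ℝ} (hy : IntervalIntegrable A volume 0 y)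
    (hy' : IntervalIntegrable A volume 0 y') :
    ∫ r in y..y', (A y + A y' - 2 * A r) / 2 =
      (∫ r in (0 : ℝ)..y, A r) - (∫ r in (0 : ℝ)..y', A r) + (y' - y) * (A y + A y') / 2 := by
  have hsplit : ∀ r, (A y + A y' - 2 * A r) / 2 = (A y + A y') / 2 - A r := fun r => by ring
  simp_rw [hsplit]
  rw [intervalIntegral.integral_sub intervalIntegrable_const (hy.symm.trans hy'),
    intervalIntegral.integral_const, smul_eq_mul,
    ← intervalIntegral.integral_interval_sub_left hy' hy]
  ring

lemma Hmul_Hinv_gammaA {y y' : ℝ} (hy : IntervalIntegrable A volume 0 y)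
    (hy' : IntervalIntegrable A volume 0 y') :
    Hmul (Hinv (gammaA A y')) (gammaA A y) =
      (A y - A y', y - y', ∫ r in y..y', (A y + A y' - 2 * A r) / 2) := by
  rw [integral_trapezoid_defect hy hy']
  simp only [Hmul, Hinv, gammaA, Prod.mk.injEq]
  refine ⟨by ring, by ring, by ring⟩

lemma Hdist_GammaA {y y' : ℝ} (hy : IntervalIntegrable A volume 0 y)
    (hy' : IntervalIntegrable A volume 0 y') (t t' : ℝ) :
    Hdist (GammaA A (y, t)) (GammaA A (y', t')) =
      Hnorm (A y - A y', y - y', t - t' + ∫ r in y..y', (A y + A y' - 2 * A r) / 2) := by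
  rw [Hdist, GammaA, GammaA, Hmul_Hinv_Hmul_center, Hmul_Hinv_gammaA hy hy']
  congr 1
  simp only [Hmul, Prod.mk.injEq]
  refine ⟨by ring, by ring, by ring⟩

lemma abs_integral_trapezoid_defect_le {K : ℝ≥0} (hA : LipschitzWith K A) (y y' : ℝ) :
    |∫ r in y..y', (A y + A y' - 2 * A r) / 2| ≤ K * (y - y') ^ 2 := by
  have hbound : ∀ r ∈ Set.uIoc y y', ‖(A y + A y' - 2 * A r) / 2‖ ≤ K * |y' - y| := by
    intro r hr
    have hr := Set.uIoc_subset_uIcc hr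
    have hry : |A r - A y| ≤ K * |y' - y| := (hA.dist_le_mul r y).trans
      (mul_le_mul_of_nonneg_left (Set.abs_sub_left_of_mem_uIcc hr) K.2)
    have hry' : |A y' - A r| ≤ K * |y' - y| := (hA.dist_le_mul y' r).trans
      (mul_le_mul_of_nonneg_left (Set.abs_sub_right_of_mem_uIcc hr) K.2)
    have htri := abs_sub (A y' - A r) (A r - A y)
    rw [show A y' - A r - (A r - A y) = A y + A y' - 2 * A r by ring] at htri
    rw [Real.norm_eq_abs, abs_div, abs_two]
    linarith
  have := intervalIntegral.norm_integral_le_of_norm_le_const hbound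
  rw [Real.norm_eq_abs] at this
  nlinarith [sq_abs (y' - y)]

end Lift

section Comparison

variable {u a T I K : ℝ}

lemma Hnorm_le_mul_parabolic (hK : 0 ≤ K) (hu : |u| ≤ K * |a|) (hI : |I| ≤ K * a ^ 2) :
    Hnorm (u, a, T + I) ≤ (1 + K) * (|a| + √|T|) := by
  have hIa := sqrt_abs_le_of_abs_le_mul_sq hK hI
  have hT := Real.sqrt_nonneg |T|
  refine max_le ?_ ?_
  · calc √(u ^ 2 + a ^ 2) ≤ √(u ^ 2) + √(a ^ 2) :=
          Real.sqrt_add_le_add_sqrt (sq_nonneg u) (sq_nonneg a)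
      _ = |u| + |a| := by rw [Real.sqrt_sq_eq_abs, Real.sqrt_sq_eq_abs]
      _ ≤ (1 + K) * (|a| + √|T|) := by nlinarith [abs_nonneg a]
  · calc √|T + I| ≤ √|T| + √|I| := Real.sqrt_abs_add_le T I
      _ ≤ (1 + K) * (|a| + √|T|) := by nlinarith [abs_nonneg a]

lemma parabolic_le_mul_Hnorm (hK : 0 ≤ K) (hI : |I| ≤ K * a ^ 2) :
    |a| + √|T| ≤ 3 * (1 + K) * Hnorm (u, a, T + I) := by
  have ha : |a| ≤ Hnorm (u, a, T + I) := abs_le_Hnorm _ _ _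
  have hT : √|T| ≤ Hnorm (u, a, T + I) + (1 + K) * |a| :=
    calc √|T| = √|(T + I) + -I| := by rw [add_neg_cancel_right]
      _ ≤ √|T + I| + √|-I| := Real.sqrt_abs_add_le _ _
      _ ≤ Hnorm (u, a, T + I) + (1 + K) * |a| := by
          rw [abs_neg]
          exact add_le_add (sqrt_abs_le_Hnorm _ _ _) (sqrt_abs_le_of_abs_le_mul_sq hK hI)
  nlinarith [abs_nonneg a]

end Comparison

theorem stmt19_general (L : ℝ) (A : ℝ → ℝ)
    (hA : ∀ x y : ℝ, |A x - A y| ≤ L * |x - y|) :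
    (∀ y y' : ℝ,
      Hmul (Hinv (gammaA A y')) (gammaA A y) =
        (A y - A y', y - y', ∫ r in y..y', (A y + A y' - 2 * A r) / 2)) ∧
    ∃ C : ℝ, 0 < C ∧ ∀ y t y' t' : ℝ,
      C⁻¹ * (1 + L)⁻¹ * (|y - y'| + Real.sqrt |t - t'|) ≤
        Hdist (GammaA A (y, t)) (GammaA A (y', t')) ∧
      Hdist (GammaA A (y, t)) (GammaA A (y', t')) ≤
        C * (1 + L) * (|y - y'| + Real.sqrt |t - t'|) := by
  have hL : 0 ≤ L := by simpa using (abs_nonneg _).trans (hA 1 0)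
  have hLip : LipschitzWith ⟨L, hL⟩ A :=
    LipschitzWith.of_dist_le_mul fun x y => by rw [Real.dist_eq, Real.dist_eq]; exact hA x y
  have hint : ∀ y, IntervalIntegrable A volume 0 y := hLip.continuous.intervalIntegrable 0
  refine ⟨fun y y' => Hmul_Hinv_gammaA (hint y) (hint y'), 3, by norm_num, fun y t y' t' => ?_⟩
  have hI := abs_integral_trapezoid_defect_le hLip y y'
  rw [Hdist_GammaA (hint y) (hint y')]
  constructor
  · rw [← mul_inv, inv_mul_le_iff₀ (by positivity)]
    exact parabolic_le_mul_Hnorm hL hI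
  · exact (Hnorm_le_mul_parabolic hL (hA y y') hI).trans
      (by nlinarith [abs_nonneg (y - y'), Real.sqrt_nonneg |t - t'|])

/-- The product formula for `γ(y')⁻¹ · γ(y)`, and the fact that the flag
parametrisation `Γ` is bilipschitz with constant comparable to `1 + L` from the
parabolic plane to the Heisenberg group. -/
theorem stmt19 (L : ℝ) (hL : 0 < L) (A : ℝ → ℝ)
    (hA : ∀ x y : ℝ, |A x - A y| ≤ L * |x - y|) :
    (∀ y y' : ℝ,
      Hmul (Hinv (gammaA A y')) (gammaA A y) =
        (A y - A y', y - y', ∫ r in y..y', (A y + A y' - 2 * A r) / 2)) ∧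
    ∃ C : ℝ, 0 < C ∧ ∀ y t y' t' : ℝ,
      C⁻¹ * (1 + L)⁻¹ * (|y - y'| + Real.sqrt |t - t'|) ≤
        Hdist (GammaA A (y, t)) (GammaA A (y', t')) ∧
      Hdist (GammaA A (y, t)) (GammaA A (y', t')) ≤
        C * (1 + L) * (|y - y'| + Real.sqrt |t - t'|) :=
  stmt19_general L A hA
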